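/- arXiv:0903.1168 — 2 statements merged into one kernel-verified Lean document; each statement's English description precedes it below -/
import Mathlib

section
/- Let A be a unital C*-algebra over ℂ, regarded as a ternary Banach algebra with ternary product [x,y,z] := x · (star y) · z, and let r, s, t be real numbers with r > s > 0 and t > 0. Let h : A → A be a mapping with h((r/s) x) = (r/s) h(x) for all x ∈ A, for which there exists a function φ : A × A × A → [0,∞) satisfying lim_{n→∞} (r/s)^{−n} φ((r/s)^n x, (r/s)^n y, (r/s)^n a) = 0 for all x, y, a ∈ A, and ‖r h((μ s x + μ t y + [a,a,a])/r) − μ s h(x) − μ t h(y) − [h(a), a, a] − [a, h(a), a] − [a, a, h(a)]‖ ≤ φ(x,y,a) for all μ ∈ ℂ and all x, y, a ∈ A. Then h is a ternary Jordan derivation; in particular h is additive, h(μ x) = μ h(x) for all μ ∈ ℂ and x ∈ A, and h([a,a,a]) = [h(a), a, a] + [a, h(a), a] + [a, a, h(a)] for all a ∈ A. -/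
open Filter Topology

/-!
Put `q = r / s > 1`. Taking `a = 0` in the inequality gives an approximate generalized Jensen
equation; since `h` commutes with `q ^ n •`, its defect at `(q ^ n x, q ^ n y)` is `q ^ n` times
the defect at `(x, y)`, whereas the bound `φ` is `o(q ^ n)` there, so the Jensen equation holds
exactly, and with `r, s, t ≠ 0` it forces `h` to be `ℂ`-linear. Then taking `μ = 0, x = y = 0`,
the defect of the ternary Leibniz rule at `q ^ n a` is `q ^ (3 n)` times its defect at `a`, so it
vanishes by the same argument.
-/

theorem eq_zero_of_norm_pow_smul_le {E : Type*} [NormedAddCommGroup E] [NormedSpace ℂ E]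
    {q : ℝ} (hq : 1 ≤ q) {k : ℕ} (hk : k ≠ 0) {e : E} {ψ : ℕ → ℝ}
    (hψ : Tendsto (fun n => (q ^ n)⁻¹ * ψ n) atTop (𝓝 0))
    (he : ∀ n : ℕ, ‖((q ^ n : ℝ) : ℂ) ^ k • e‖ ≤ ψ n) : e = 0 := by
  refine norm_le_zero_iff.mp (ge_of_tendsto' hψ fun n => ?_)
  have hqn : 1 ≤ q ^ n := one_le_pow₀ hq
  rw [le_inv_mul_iff₀ (by positivity)]
  calc q ^ n * ‖e‖ ≤ (q ^ n) ^ k * ‖e‖ := by gcongr; exact le_self_pow₀ hqn hk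
    _ = ‖((q ^ n : ℝ) : ℂ) ^ k • e‖ := by
      rw [norm_smul, norm_pow, Complex.norm_real, Real.norm_of_nonneg (by positivity)]
    _ ≤ ψ n := he n

theorem map_pow_smul {M α β : Type*} [Monoid M] [MulAction M α] [MulAction M β] {f : α → β}
    {c : M} (hf : ∀ x, f (c • x) = c • f x) (n : ℕ) (x : α) : f (c ^ n • x) = c ^ n • f x := by
  simpa only [smul_iterate_apply] using
    (Function.Semiconj.iterate_right (f := f) (ga := (c • ·)) (gb := (c • ·)) hf n) x

section Jensen

variable {M : Type*} [AddCommGroup M] [Module ℂ M]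

noncomputable def jensenDefect (r s t : ℝ) (h : M → M) (μ : ℂ) (x y : M) : M :=
  (r : ℂ) • h ((r : ℂ)⁻¹ • (μ • (s : ℂ) • x + μ • (t : ℂ) • y)) - μ • (s : ℂ) • h x
    - μ • (t : ℂ) • h y

theorem jensenDefect_smul {h : M → M} {c : ℂ} (hc : ∀ x, h (c • x) = c • h x)
    (r s t : ℝ) (μ : ℂ) (x y : M) :
    jensenDefect r s t h μ (c • x) (c • y) = c • jensenDefect r s t h μ x y := by
  have harg : (r : ℂ)⁻¹ • (μ • (s : ℂ) • c • x + μ • (t : ℂ) • c • y)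
      = c • ((r : ℂ)⁻¹ • (μ • (s : ℂ) • x + μ • (t : ℂ) • y)) := by module
  simp only [jensenDefect, harg, hc]
  module

theorem isLinearMap_of_jensenDefect_eq_zero {r s t : ℝ} (hr : r ≠ 0) (hs : s ≠ 0) (ht : t ≠ 0)
    {h : M → M} (hJ : ∀ μ x y, jensenDefect r s t h μ x y = 0) : IsLinearMap ℂ h := by
  have hrC : (r : ℂ) ≠ 0 := by exact_mod_cast hr
  have hsC : (s : ℂ) ≠ 0 := by exact_mod_cast hs
  have htC : (t : ℂ) ≠ 0 := by exact_mod_cast ht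
  have hJensen : ∀ μ x y, (r : ℂ) • h ((r : ℂ)⁻¹ • (μ • (s : ℂ) • x + μ • (t : ℂ) • y))
      = μ • (s : ℂ) • h x + μ • (t : ℂ) • h y := fun μ x y => by
    rw [← sub_eq_zero, ← sub_sub]; exact hJ μ x y
  have h0 : h 0 = 0 := by
    have := hJensen 0 0 0
    simp only [zero_smul, smul_zero, add_zero] at this
    exact (smul_eq_zero.mp this).resolve_left hrC
  have hsmul : ∀ (c : ℂ) x, h (c • x) = c • h x := fun c x => by
    have harg : (r : ℂ)⁻¹ • ((c * r / t) • (s : ℂ) • (0 : M) + (c * r / t) • (t : ℂ) • x)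
        = c • x := by
      match_scalars; field_simp
    have := hJensen (c * r / t) 0 x
    rw [harg, h0] at this
    refine smul_right_injective M hrC (this.trans ?_)
    match_scalars; field_simp
  refine ⟨fun u v => ?_, hsmul⟩
  have harg : (r : ℂ)⁻¹ • ((1 : ℂ) • (s : ℂ) • ((r / s : ℂ) • u)
      + (1 : ℂ) • (t : ℂ) • ((r / t : ℂ) • v)) = u + v := by
    match_scalars <;> field_simp
  have := hJensen 1 ((r / s : ℂ) • u) ((r / t : ℂ) • v)
  rw [harg, hsmul, hsmul] at this
  refine smul_right_injective M hrC (this.trans ?_)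
  match_scalars <;> field_simp

end Jensen

section Jordan

variable {A : Type*} [NormedRing A] [StarRing A] [NormedAlgebra ℂ A] [StarModule ℂ A]

def jordanDefect (h : A → A) (a : A) : A :=
  h (a * star a * a) - (h a * star a * a + a * star (h a) * a + a * star a * h a)

theorem jordanDefect_ofReal_smul {h : A → A} (hh : IsLinearMap ℂ h) (c : ℝ) (a : A) :
    jordanDefect h ((c : ℂ) • a) = (c : ℂ) ^ 3 • jordanDefect h a := by
  have hstar : ∀ x : A, star ((c : ℂ) • x) = (c : ℂ) • star x := fun x => by
    rw [star_smul, Complex.star_def, Complex.conj_ofReal]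
  simp only [jordanDefect, hstar, hh.map_smul, smul_mul_assoc, mul_smul_comm, smul_smul]
  module

end Jordan

theorem stmt_7_general {A : Type*} [NormedRing A] [StarRing A]
    [NormedAlgebra ℂ A] [StarModule ℂ A]
    (r s t : ℝ) (hrs : r > s) (hs : s > 0) (ht : t > 0)
    (h : A → A)
    (hhom : ∀ x : A, h (((r / s : ℝ) : ℂ) • x) = ((r / s : ℝ) : ℂ) • h x)
    (φ : A → A → A → ℝ)
    (hlim : ∀ x y a : A, Tendsto (fun n : ℕ =>
      ((r / s) ^ n)⁻¹ * φ ((((r / s) ^ n : ℝ) : ℂ) • x) ((((r / s) ^ n : ℝ) : ℂ) • y)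
        ((((r / s) ^ n : ℝ) : ℂ) • a)) atTop (𝓝 0))
    (hineq : ∀ (μ : ℂ) (x y a : A),
      ‖(r : ℂ) • h ((r : ℂ)⁻¹ • (μ • (s : ℂ) • x + μ • (t : ℂ) • y + a * star a * a))
          - μ • (s : ℂ) • h x - μ • (t : ℂ) • h y
          - h a * star a * a - a * star (h a) * a - a * star a * h a‖
        ≤ φ x y a) :
    (∀ x y, h (x + y) = h x + h y) ∧
    (∀ (μ : ℂ) (x : A), h (μ • x) = μ • h x) ∧
    (∀ a : A, h (a * star a * a) =
      h a * star a * a + a * star (h a) * a + a * star a * h a) := by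
  have hr : 0 < r := hs.trans hrs
  have hq : 1 ≤ r / s := (one_le_div hs).2 hrs.le
  have hpow : ∀ (n : ℕ) x, h ((((r / s) ^ n : ℝ) : ℂ) • x) = (((r / s) ^ n : ℝ) : ℂ) • h x := by
    push_cast; exact map_pow_smul (by exact_mod_cast hhom)
  have hJensen : ∀ μ x y, jensenDefect r s t h μ x y = 0 := fun μ x y => by
    refine eq_zero_of_norm_pow_smul_le hq one_ne_zero
      (by simpa only [smul_zero] using hlim x y 0) fun n => ?_
    rw [pow_one, ← jensenDefect_smul (hpow n)]
    simpa [jensenDefect] using hineq μ _ _ 0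
  have hlin : IsLinearMap ℂ h := isLinearMap_of_jensenDefect_eq_zero hr.ne' hs.ne' ht.ne' hJensen
  refine ⟨hlin.map_add, hlin.map_smul,
    fun a => sub_eq_zero.mp (show jordanDefect h a = 0 from ?_)⟩
  refine eq_zero_of_norm_pow_smul_le hq three_ne_zero
    (by simpa only [smul_zero] using hlim 0 0 a) fun n => ?_
  rw [← jordanDefect_ofReal_smul hlin]
  have hrC : (r : ℂ) ≠ 0 := by exact_mod_cast hr.ne'
  simpa [jordanDefect, hlin.map_smul, hrC, sub_sub] using hineq 0 0 0 ((((r / s) ^ n : ℝ) : ℂ) • a)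

/-- Superstability of ternary Jordan derivations on a C*-algebra with
ternary product `[x,y,z] = x * star y * z`. -/
theorem stmt_7 {A : Type*} [NormedRing A] [StarRing A] [CStarRing A]
    [CompleteSpace A] [NormedAlgebra ℂ A] [StarModule ℂ A]
    (r s t : ℝ) (hrs : r > s) (hs : s > 0) (ht : t > 0)
    (h : A → A)
    (hhom : ∀ x : A, h (((r / s : ℝ) : ℂ) • x) = ((r / s : ℝ) : ℂ) • h x)
    (φ : A → A → A → ℝ) (hφ0 : ∀ x y a, 0 ≤ φ x y a)
    (hlim : ∀ x y a : A, Tendsto (fun n : ℕ =>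
      ((r / s) ^ n)⁻¹ * φ ((((r / s) ^ n : ℝ) : ℂ) • x) ((((r / s) ^ n : ℝ) : ℂ) • y)
        ((((r / s) ^ n : ℝ) : ℂ) • a)) atTop (𝓝 0))
    (hineq : ∀ (μ : ℂ) (x y a : A),
      ‖(r : ℂ) • h ((r : ℂ)⁻¹ • (μ • (s : ℂ) • x + μ • (t : ℂ) • y + a * star a * a))
          - μ • (s : ℂ) • h x - μ • (t : ℂ) • h y
          - h a * star a * a - a * star (h a) * a - a * star a * h a‖
        ≤ φ x y a) :
    (∀ x y, h (x + y) = h x + h y) ∧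
    (∀ (μ : ℂ) (x : A), h (μ • x) = μ • h x) ∧
    (∀ a : A, h (a * star a * a) =
      h a * star a * a + a * star (h a) * a + a * star a * h a) :=
  stmt_7_general r s t hrs hs ht h hhom φ hlim hineq
end

section
/- Let A be a unital C*-algebra over ℂ, regarded as a ternary Banach algebra with ternary product [x,y,z] := x · (star y) · z, and let r, s, t be real numbers with r > s > 0 and t > 0. Suppose A is linearly spanned by a set S ⊆ A, and let f : A → A be a mapping with f(0) = 0 such that for all sufficiently large positive integers n, f((r/s)^{2n} [s₁, s₂, a]) = [f((r/s)^n s₁), (r/s)^n s₂, a] + [(r/s)^n s₁, f((r/s)^n s₂), a] + [(r/s)^n s₁, (r/s)^n s₂, f(a)] for all s₁, s₂ ∈ S and a ∈ A. Suppose further there exists φ : A × A × A → [0,∞) with φ̃(x,y,a) := (1/r) ∑_{j=0}^∞ (r/s)^{−j} φ((r/s)^j x, (r/s)^j y, (r/s)^j a) < ∞ for all x, y, a ∈ A, such that ‖r f((μ s x + μ t y + [a,a,a])/r) − μ s f(x) − μ t f(y) − [f(a), a, a] − [a, f(a), a] − [a, a, f(a)]‖ ≤ φ(x,y,a) for all μ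 ∈ 𝕋¹ = {z ∈ ℂ : |z| = 1} and all x, y, a ∈ A. Then there exists a unique ternary Jordan derivation h : A → A such that ‖f(x) − h(x)‖ ≤ φ̃(x,x,0) for all x ∈ A. -/
/-!
Write `q = r / s > 0` and `f_n x = q⁻ⁿ f (qⁿ x)` (`rescale f q n x`). The case `μ = 1`,
`y = a = 0` of the inequality bounds `‖f_n x - f_{n+1} x‖` by a summable sequence, so `(f_n x)` is
Cauchy. Applying the multiplicativity hypothesis to `qᵐ a` gives, for `s₁, s₂ ∈ S` and large `n`,
`f_{2n} b - f_{2n+m} b = s₁ (star s₂) (f a - f_m a)` with `b = s₁ (star s₂) a`; the left side tends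
to `0`, and since `S` spans the unital algebra `A` this forces `f_m = f`. So `f` is itself
`qⁿ`-homogeneous; homogeneity turns the approximate Jensen equation into an exact one, which makes
`f` additive and `𝕋¹`-homogeneous, hence `ℂ`-linear, and the derivation identity passes from
`S × S × A` to `A × A × A` by sesquilinearity. Thus `h = f` works, and any other candidate `g` is
also homogeneous, so for every `n`, `‖f x - g x‖` is at most `1 / r` times the `n`-th tail of the
series in the bound.
-/

open Filter Topology ComplexConjugate

lemma CauchySeq.tendsto_sub_comp {F : Type*} [SeminormedAddCommGroup F] {u : ℕ → F}
    (hu : CauchySeq u) {g₁ g₂ : ℕ → ℕ} (h₁ : Tendsto g₁ atTop atTop) (h₂ : Tendsto g₂ atTop atTop) :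
    Tendsto (fun n => u (g₁ n) - u (g₂ n)) atTop (𝓝 0) := by
  have hg : Tendsto (fun n => (g₁ n, g₂ n)) atTop atTop := by
    rw [← prod_atTop_atTop_eq]
    exact h₁.prodMk h₂
  rw [tendsto_zero_iff_norm_tendsto_zero]
  exact ((cauchySeq_iff_tendsto_dist_atTop_0.1 hu).comp hg).congr fun n => dist_eq_norm _ _

section Rescale

variable {E F : Type*}

noncomputable def rescale [SMul ℝ E] [SMul ℝ F] (f : E → F) (c : ℝ) (n : ℕ) (x : E) : F :=
  (c ^ n)⁻¹ • f (c ^ n • x)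

variable [NormedAddCommGroup E] [NormedSpace ℝ E] [NormedAddCommGroup F] [NormedSpace ℝ F]
  {f g : E → F} {c : ℝ}

@[simp]
lemma rescale_zero (f : E → F) (c : ℝ) : rescale f c 0 = f := by
  funext x
  simp [rescale]

lemma rescale_eq_self_iff (hc : c ≠ 0) {n : ℕ} {x : E} :
    rescale f c n x = f x ↔ f (c ^ n • x) = c ^ n • f x := by
  rw [rescale, inv_smul_eq_iff₀ (pow_ne_zero n hc)]

lemma norm_rescale_sub_rescale_succ_le (hc : 0 < c) {ψ : E → ℝ}
    (hstep : ∀ x, ‖f x - c⁻¹ • f (c • x)‖ ≤ ψ x) (n : ℕ) (x : E) :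
    ‖rescale f c n x - rescale f c (n + 1) x‖ ≤ (c ^ n)⁻¹ * ψ (c ^ n • x) := by
  have hdiff : rescale f c n x - rescale f c (n + 1) x
      = (c ^ n)⁻¹ • (f (c ^ n • x) - c⁻¹ • f (c • c ^ n • x)) := by
    simp only [rescale, smul_sub, smul_smul, pow_succ', mul_inv_rev]
  rw [hdiff, norm_smul, Real.norm_of_nonneg (by positivity)]
  gcongr
  exact hstep _

lemma cauchySeq_rescale (hc : 0 < c) {ψ : E → ℝ}
    (hstep : ∀ x, ‖f x - c⁻¹ • f (c • x)‖ ≤ ψ x) {x : E}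
    (hψ : Summable fun n => (c ^ n)⁻¹ * ψ (c ^ n • x)) :
    CauchySeq fun n => rescale f c n x :=
  cauchySeq_of_dist_le_of_summable _
    (fun n => (dist_eq_norm _ _).trans_le (norm_rescale_sub_rescale_succ_le hc hstep n x)) hψ

lemma eq_zero_of_norm_pow_smul_le_s10 (hc : 0 < c) {v : F} {b : ℕ → ℝ}
    (hv : ∀ n, ‖c ^ n • v‖ ≤ b n) (hb : Tendsto (fun n => (c ^ n)⁻¹ * b n) atTop (𝓝 0)) :
    v = 0 := by
  refine norm_le_zero_iff.1 (ge_of_tendsto' hb fun n => ?_)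
  have hcn : 0 < c ^ n := pow_pos hc n
  rw [le_inv_mul_iff₀ hcn, ← Real.norm_of_nonneg hcn.le, ← norm_smul]
  exact hv n

lemma eq_of_map_pow_smul_of_norm_sub_le (hc : 0 < c)
    (hf : ∀ n x, f (c ^ n • x) = c ^ n • f x) (hg : ∀ n x, g (c ^ n • x) = c ^ n • g x)
    (ψ : E → ℝ) (K : ℝ) (hfg : ∀ x, ‖f x - g x‖ ≤ K * ∑' j, (c ^ j)⁻¹ * ψ (c ^ j • x)) :
    f = g := by
  funext x
  rw [← sub_eq_zero]
  set tail : ℕ → ℝ := fun n => ∑' j, (c ^ (j + n))⁻¹ * ψ (c ^ (j + n) • x)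
  refine eq_zero_of_norm_pow_smul_le_s10 hc (b := fun n => c ^ n * (K * tail n)) (fun n => ?_) ?_
  · have hscaled : c ^ n * (K * tail n) = K * ∑' j, (c ^ j)⁻¹ * ψ (c ^ j • c ^ n • x) := by
      rw [mul_left_comm, ← tsum_mul_left]
      congr 2 with j
      rw [smul_smul, ← pow_add, pow_add]
      field_simp
    rw [hscaled, smul_sub, ← hf, ← hg]
    exact hfg _
  · have htail := (tendsto_sum_nat_add fun j => (c ^ j)⁻¹ * ψ (c ^ j • x)).const_mul K
    rw [mul_zero] at htail
    refine htail.congr fun n => ?_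
    simp only [inv_mul_cancel_left₀ (pow_ne_zero n hc.ne'), tail]

end Rescale

lemma Complex.mem_subsemiringClosure_sphere (c : ℂ) :
    c ∈ Subsemiring.closure (Metric.sphere (0 : ℂ) 1) := by
  set T := Subsemiring.closure (Metric.sphere (0 : ℂ) 1)
  have hsphere : ∀ μ : ℂ, ‖μ‖ = 1 → μ ∈ T :=
    fun μ hμ => Subsemiring.subset_closure (by simpa using hμ)
  -- `2a = μ + conj μ` for the unit vector `μ = a + i √(1 - a²)`
  have htwice : ∀ a : ℝ, |a| ≤ 1 → ((2 * a : ℝ) : ℂ) ∈ T := by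
    intro a ha
    have hsq : √(1 - a ^ 2) ^ 2 = 1 - a ^ 2 :=
      Real.sq_sqrt (by nlinarith [abs_nonneg a, sq_abs a])
    set μ : ℂ := ⟨a, √(1 - a ^ 2)⟩
    have hμ : ‖μ‖ = 1 := by
      rw [Complex.norm_def, Complex.normSq_mk, Real.sqrt_eq_one]
      nlinarith
    have hsum : ((2 * a : ℝ) : ℂ) = μ + conj μ := by
      apply Complex.ext <;> simp [μ]; ring
    rw [hsum]
    exact add_mem (hsphere μ hμ) (hsphere _ (by rwa [RCLike.norm_conj]))
  rcases eq_or_ne c 0 with rfl | hc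
  · exact zero_mem T
  obtain ⟨n, hn⟩ := exists_nat_ge ‖c‖
  have hc' : 0 < ‖c‖ := norm_pos_iff.2 hc
  have hn0 : (0 : ℝ) < n := hc'.trans_le hn
  have hdecomp : c = n * ((2 * (‖c‖ / (2 * n)) : ℝ) : ℂ) * (c / ‖c‖) := by
    have hn0' : (n : ℂ) ≠ 0 := by exact_mod_cast hn0.ne'
    have hc'' : (‖c‖ : ℂ) ≠ 0 := by exact_mod_cast hc'.ne'
    push_cast
    field_simp
  rw [hdecomp]
  refine mul_mem (mul_mem (natCast_mem T n) (htwice _ ?_)) (hsphere _ ?_)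
  · rw [abs_of_nonneg (by positivity), div_le_one (by positivity)]
    linarith
  · rw [norm_div, Complex.norm_real, norm_norm, div_self hc'.ne']

section Linear

variable {E F : Type*} [AddCommGroup E] [Module ℂ E] [AddCommGroup F] [Module ℂ F] {f : E → F}

lemma isLinearMap_of_map_add_of_map_unit_smul (hadd : ∀ x y, f (x + y) = f x + f y)
    (hunit : ∀ μ : ℂ, ‖μ‖ = 1 → ∀ x, f (μ • x) = μ • f x) : IsLinearMap ℂ f := by
  have hf0 : f 0 = 0 := by simpa using hadd 0 0
  let K : Subsemiring ℂ :=
    { carrier := {c | ∀ x, f (c • x) = c • f x}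
      mul_mem' := fun {a b} ha hb x => by rw [mul_smul, ha (b • x), hb x, mul_smul]
      one_mem' := fun x => by simp only [one_smul]
      add_mem' := fun {a b} ha hb x => by rw [add_smul, hadd, ha x, hb x, add_smul]
      zero_mem' := fun x => by simp only [zero_smul, hf0] }
  have hK : Subsemiring.closure (Metric.sphere 0 1) ≤ K :=
    Subsemiring.closure_le.2 fun μ hμ => hunit μ (by simpa using hμ)
  exact ⟨hadd, fun c x => hK (Complex.mem_subsemiringClosure_sphere c) x⟩

lemma isLinearMap_of_jensen {r s t : ℂ} (hr : r ≠ 0) (hs : s ≠ 0) (ht : t ≠ 0) (hf0 : f 0 = 0)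
    (hJ : ∀ μ : ℂ, ‖μ‖ = 1 → ∀ x y,
      r • f (r⁻¹ • (μ • s • x + μ • t • y)) = μ • s • f x + μ • t • f y) :
    IsLinearMap ℂ f := by
  have hleft : ∀ μ : ℂ, ‖μ‖ = 1 → ∀ x, r • f (r⁻¹ • μ • s • x) = μ • s • f x := by
    intro μ hμ x
    simpa [hf0] using hJ μ hμ x 0
  have hright : ∀ y, r • f (r⁻¹ • t • y) = t • f y := by
    intro y
    simpa [hf0] using hJ 1 (by simp) 0 y
  have hcancel : ∀ u : ℂ, u ≠ 0 → ∀ z : E, r⁻¹ • u • (r / u) • z = z := by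
    intro u hu z
    rw [smul_smul, smul_smul, show r⁻¹ * u * (r / u) = 1 by field_simp, one_smul]
  have hscale_s : ∀ z, s • f ((r / s) • z) = r • f z := by
    intro z
    have h := hleft 1 (by simp) ((r / s) • z)
    rwa [one_smul, one_smul, hcancel s hs, eq_comm] at h
  have hscale_t : ∀ z, t • f ((r / t) • z) = r • f z := by
    intro z
    have h := hright ((r / t) • z)
    rwa [hcancel t ht, eq_comm] at h
  refine isLinearMap_of_map_add_of_map_unit_smul (fun x y => ?_) (fun μ hμ x => ?_)
  · have h := hJ 1 (by simp) ((r / s) • x) ((r / t) • y)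
    simp only [one_smul] at h
    rw [hscale_s, hscale_t, ← smul_add, smul_add, hcancel s hs, hcancel t ht] at h
    exact smul_right_injective F hr h
  · have h := hleft 1 (by simp) (μ • x)
    rw [one_smul, one_smul, smul_comm s μ x, hleft μ hμ, smul_comm μ s] at h
    exact smul_right_injective F hs h.symm

end Linear

section ApproximateJensen

variable {E F : Type*} [NormedAddCommGroup E] [NormedSpace ℂ E]
  [NormedAddCommGroup F] [NormedSpace ℂ F] {f : E → F}

lemma norm_sub_inv_smul_map_smul_le {r s : ℝ} (hr : 0 < r) (hs : 0 < s) {ψ : E → ℝ}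
    (h : ∀ x, ‖(r : ℂ) • f ((r : ℂ)⁻¹ • (s : ℂ) • x) - (s : ℂ) • f x‖ ≤ ψ x) (x : E) :
    ‖f x - (r / s)⁻¹ • f ((r / s) • x)‖ ≤ r⁻¹ * ψ ((r / s) • x) := by
  have hx := h ((r / s) • x)
  rw [← Complex.ofReal_inv] at hx
  simp only [Complex.coe_smul, smul_smul] at hx
  rw [show r⁻¹ * (s * (r / s)) = 1 by field_simp, one_smul] at hx
  have hdiff : f x - (r / s)⁻¹ • f ((r / s) • x) = r⁻¹ • (r • f x - s • f ((r / s) • x)) := by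
    rw [smul_sub, smul_smul, smul_smul, inv_mul_cancel₀ hr.ne', one_smul, inv_div,
      div_eq_inv_mul]
  rw [hdiff, norm_smul, Real.norm_of_nonneg (inv_nonneg.2 hr.le)]
  gcongr

lemma jensen_of_map_pow_smul {r s t : ℂ} {c : ℝ} (hc : 0 < c)
    (hhom : ∀ n x, f (c ^ n • x) = c ^ n • f x) {ψ : E → E → ℝ}
    (hJ : ∀ μ : ℂ, ‖μ‖ = 1 → ∀ x y,
      ‖r • f (r⁻¹ • (μ • s • x + μ • t • y)) - μ • s • f x - μ • t • f y‖ ≤ ψ x y)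
    (hψ : ∀ x y, Tendsto (fun n => (c ^ n)⁻¹ * ψ (c ^ n • x) (c ^ n • y)) atTop (𝓝 0))
    (μ : ℂ) (hμ : ‖μ‖ = 1) (x y : E) :
    r • f (r⁻¹ • (μ • s • x + μ • t • y)) = μ • s • f x + μ • t • f y := by
  rw [← sub_eq_zero, ← sub_sub]
  refine eq_zero_of_norm_pow_smul_le_s10 hc (fun n => ?_) (hψ x y)
  have h := hJ μ hμ (c ^ n • x) (c ^ n • y)
  rw [show r⁻¹ • (μ • s • c ^ n • x + μ • t • c ^ n • y)
      = c ^ n • r⁻¹ • (μ • s • x + μ • t • y) by module, hhom, hhom, hhom] at h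
  refine le_of_eq_of_le ?_ h
  congr 1
  module

end ApproximateJensen

section StarAlgebra

variable {A : Type*} [Ring A] [StarRing A] [Algebra ℂ A] [StarModule ℂ A] {S : Set A}

lemma eq_zero_of_forall_mul_star_mul_eq_zero (hspan : Submodule.span ℂ S = ⊤) {w : A}
    (hw : ∀ x ∈ S, ∀ y ∈ S, x * star y * w = 0) : w = 0 := by
  have hS : ∀ y ∈ S, star y * w = 0 := by
    intro y hy
    suffices ∀ x : A, x * star y * w = 0 by simpa using this 1
    intro x
    induction (hspan ▸ Submodule.mem_top : x ∈ Submodule.span ℂ S) using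
      Submodule.span_induction with
    | mem x hx => exact hw x hx y hy
    | zero => simp
    | add x z _ _ hx hz => rw [add_mul, add_mul, hx, hz, add_zero]
    | smul c x _ hx => rw [smul_mul_assoc, smul_mul_assoc, hx, smul_zero]
  suffices ∀ y : A, star y * w = 0 by simpa using this 1
  intro y
  induction (hspan ▸ Submodule.mem_top : y ∈ Submodule.span ℂ S) using
    Submodule.span_induction with
  | mem y hy => exact hS y hy
  | zero => simp
  | add y z _ _ hy hz => rw [star_add, add_mul, hy, hz, add_zero]
  | smul c y _ hy => rw [star_smul, smul_mul_assoc, hy, smul_zero]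

lemma map_mul_star_mul_of_span_eq_top {f : A → A} (hf : IsLinearMap ℂ f)
    (hspan : Submodule.span ℂ S = ⊤)
    (hS : ∀ x ∈ S, ∀ y ∈ S, ∀ a,
      f (x * star y * a) = f x * star y * a + x * star (f y) * a + x * star y * f a)
    (x y a : A) :
    f (x * star y * a) = f x * star y * a + x * star (f y) * a + x * star y * f a := by
  have hS' : ∀ y ∈ S, ∀ x a : A,
      f (x * star y * a) = f x * star y * a + x * star (f y) * a + x * star y * f a := by
    intro y hy x a
    induction (hspan ▸ Submodule.mem_top : x ∈ Submodule.span ℂ S) using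
      Submodule.span_induction with
    | mem x hx => exact hS x hx y hy a
    | zero => simp [hf.map_zero]
    | add x z _ _ hx hz =>
      simp only [add_mul, hf.map_add, hx, hz]
      abel
    | smul c x _ hx => simp only [smul_mul_assoc, hf.map_smul, hx, smul_add]
  induction (hspan ▸ Submodule.mem_top : y ∈ Submodule.span ℂ S) using
    Submodule.span_induction with
  | mem y hy => exact hS' y hy x a
  | zero => simp [hf.map_zero]
  | add y z _ _ hy hz =>
    simp only [star_add, mul_add, add_mul, hf.map_add, hy, hz]
    abel
  | smul c y _ hy =>
    simp only [star_smul, hf.map_smul, mul_smul_comm, smul_mul_assoc, hy, smul_add]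

end StarAlgebra

lemma rescale_mul_star_mul {A : Type*} [Ring A] [StarRing A] [Algebra ℝ A] [StarModule ℝ A]
    {f : A → A} {c : ℝ} (hc : c ≠ 0) {n : ℕ} {x y : A}
    (h : ∀ a, f (c ^ (2 * n) • (x * star y * a)) = f (c ^ n • x) * star (c ^ n • y) * a
      + c ^ n • x * star (f (c ^ n • y)) * a + c ^ n • x * star (c ^ n • y) * f a)
    (m : ℕ) (a : A) :
    rescale f c (2 * n + m) (x * star y * a) = rescale f c n x * star y * a
      + x * star (rescale f c n y) * a + x * star y * rescale f c m a := by
  have h' := h (c ^ m • a)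
  simp only [star_smul, star_trivial, smul_mul_assoc, mul_smul_comm, smul_smul,
    ← pow_add] at h'
  simp only [rescale, h', star_smul, star_trivial, smul_mul_assoc, mul_smul_comm, smul_add,
    smul_smul]
  match_scalars <;> field_simp <;> ring

section Homogeneity

variable {A : Type*} [NormedRing A] [StarRing A] [NormedAlgebra ℂ A] [StarModule ℂ A]

lemma map_pow_smul_of_eventually_leibniz {S : Set A} (hspan : Submodule.span ℂ S = ⊤)
    {f : A → A} {c : ℝ} (hc : 0 < c) (hcauchy : ∀ x, CauchySeq fun n => rescale f c n x)
    (hmul : ∀ᶠ n in atTop, ∀ x ∈ S, ∀ y ∈ S, ∀ a, f (c ^ (2 * n) • (x * star y * a)) =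
      f (c ^ n • x) * star (c ^ n • y) * a + c ^ n • x * star (f (c ^ n • y)) * a
        + c ^ n • x * star (c ^ n • y) * f a)
    (m : ℕ) (a : A) : f (c ^ m • a) = c ^ m • f a := by
  rw [← rescale_eq_self_iff hc.ne', eq_comm, ← sub_eq_zero]
  refine eq_zero_of_forall_mul_star_mul_eq_zero hspan fun x hx y hy => ?_
  -- `rescale f c (2n) b - rescale f c (2n + m) b` tends to `0` and is eventually this constant
  have hlim := (hcauchy (x * star y * a)).tendsto_sub_comp
    (tendsto_atTop_mono (fun n => show n ≤ 2 * n by omega) tendsto_id)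
    (tendsto_atTop_mono (fun n => show n ≤ 2 * n + m by omega) tendsto_id)
  refine tendsto_nhds_unique tendsto_const_nhds (hlim.congr' ?_)
  filter_upwards [hmul] with n hn
  have key := rescale_mul_star_mul hc.ne' fun a => hn x hx y hy a
  rw [key m a, ← add_zero (2 * n), key 0 a, rescale_zero, mul_sub]
  abel

end Homogeneity

theorem stmt_10_general {A : Type*} [NormedRing A] [StarRing A]
    [NormedAlgebra ℂ A] [StarModule ℂ A]
    (r s t : ℝ) (hrs : r > s) (hs : s > 0) (ht : t > 0)
    (S : Set A) (hspan : Submodule.span ℂ S = ⊤)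
    (f : A → A) (hf0 : f 0 = 0)
    (hmul : ∃ N : ℕ, ∀ n : ℕ, n ≥ N → 0 < n → ∀ s₁ ∈ S, ∀ s₂ ∈ S, ∀ a : A,
      f ((((r / s) ^ (2 * n) : ℝ) : ℂ) • (s₁ * star s₂ * a)) =
        f ((((r / s) ^ n : ℝ) : ℂ) • s₁) * star ((((r / s) ^ n : ℝ) : ℂ) • s₂) * a
        + ((((r / s) ^ n : ℝ) : ℂ) • s₁) * star (f ((((r / s) ^ n : ℝ) : ℂ) • s₂)) * a
        + ((((r / s) ^ n : ℝ) : ℂ) • s₁) * star ((((r / s) ^ n : ℝ) : ℂ) • s₂) * f a)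
    (φ : A → A → A → ℝ) (hφ0 : ∀ x y a, 0 ≤ φ x y a)
    (hsum : ∀ x y a : A, Summable (fun j : ℕ =>
      ((r / s) ^ j)⁻¹ * φ ((((r / s) ^ j : ℝ) : ℂ) • x) ((((r / s) ^ j : ℝ) : ℂ) • y)
        ((((r / s) ^ j : ℝ) : ℂ) • a)))
    (hineq : ∀ μ : ℂ, ‖μ‖ = 1 → ∀ x y a : A,
      ‖(r : ℂ) • f ((r : ℂ)⁻¹ • (μ • (s : ℂ) • x + μ • (t : ℂ) • y + a * star a * a))
          - μ • (s : ℂ) • f x - μ • (t : ℂ) • f y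
          - f a * star a * a - a * star (f a) * a - a * star a * f a‖
        ≤ φ x y a) :
    ∃! h : A → A,
      (IsLinearMap ℂ h ∧ ∀ x : A, h (x * star x * x) =
        h x * star x * x + x * star (h x) * x + x * star x * h x) ∧
      ∀ x : A, ‖f x - h x‖ ≤
        (1 / r) * ∑' j : ℕ,
          ((r / s) ^ j)⁻¹ * φ ((((r / s) ^ j : ℝ) : ℂ) • x) ((((r / s) ^ j : ℝ) : ℂ) • x) 0 := by
  obtain ⟨N, hmul⟩ := hmul
  have hr : 0 < r := hs.trans hrs
  have hq : 0 < r / s := div_pos hr hs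
  simp only [Complex.coe_smul] at hmul hsum ⊢
  have hJ : ∀ μ : ℂ, ‖μ‖ = 1 → ∀ x y : A,
      ‖(r : ℂ) • f ((r : ℂ)⁻¹ • (μ • (s : ℂ) • x + μ • (t : ℂ) • y))
        - μ • (s : ℂ) • f x - μ • (t : ℂ) • f y‖ ≤ φ x y 0 :=
    fun μ hμ x y => by simpa [hf0] using hineq μ hμ x y 0
  have hstep := norm_sub_inv_smul_map_smul_le hr hs (ψ := fun x => φ x 0 0)
    fun x => by simpa [hf0] using hJ 1 (by simp) x 0
  have hhom : ∀ m a, f ((r / s) ^ m • a) = (r / s) ^ m • f a := by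
    refine map_pow_smul_of_eventually_leibniz hspan hq (fun x => cauchySeq_rescale hq hstep ?_)
      (eventually_atTop.2 ⟨max N 1, fun n hn => hmul n (le_of_max_le_left hn) (by omega)⟩)
    have h := (hsum ((r / s) • x) 0 0).mul_left r⁻¹
    simp only [smul_zero, smul_comm _ (r / s) x] at h
    exact h.congr fun n => mul_left_comm _ _ _
  have hlin : IsLinearMap ℂ f := isLinearMap_of_jensen (by exact_mod_cast hr.ne')
    (by exact_mod_cast hs.ne') (by exact_mod_cast ht.ne') hf0
    (jensen_of_map_pow_smul hq hhom hJ fun x y => by simpa using (hsum x y 0).tendsto_atTop_zero)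
  have hresc : ∀ n, rescale f (r / s) n = f :=
    fun n => funext fun x => (rescale_eq_self_iff hq.ne').2 (hhom n x)
  have hleib := map_mul_star_mul_of_span_eq_top hlin hspan fun x hx y hy a => by
    simpa only [hresc] using rescale_mul_star_mul hq.ne'
      (fun a => hmul (max N 1) (le_max_left _ _) (by omega) x hx y hy a) 0 a
  refine ⟨f, ⟨⟨hlin, fun x => hleib x x x⟩, fun x => ?_⟩, fun g hg => ?_⟩
  · rw [sub_self, norm_zero]
    exact mul_nonneg (by positivity) (tsum_nonneg fun j => mul_nonneg (by positivity) (hφ0 _ _ _))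
  · refine (eq_of_map_pow_smul_of_norm_sub_le hq hhom (fun n x => ?_) (fun x => φ x x 0) (1 / r)
      hg.2).symm
    rw [← Complex.coe_smul, hg.1.1.map_smul, Complex.coe_smul]

/-- Stability of ternary Jordan derivations when `A` is linearly spanned by a
set `S` and `f` asymptotically satisfies the derivation identity on spanning
elements. -/
theorem stmt_10 {A : Type*} [NormedRing A] [StarRing A] [CStarRing A]
    [CompleteSpace A] [NormedAlgebra ℂ A] [StarModule ℂ A]
    (r s t : ℝ) (hrs : r > s) (hs : s > 0) (ht : t > 0)
    (S : Set A) (hspan : Submodule.span ℂ S = ⊤)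
    (f : A → A) (hf0 : f 0 = 0)
    (hmul : ∃ N : ℕ, ∀ n : ℕ, n ≥ N → 0 < n → ∀ s₁ ∈ S, ∀ s₂ ∈ S, ∀ a : A,
      f ((((r / s) ^ (2 * n) : ℝ) : ℂ) • (s₁ * star s₂ * a)) =
        f ((((r / s) ^ n : ℝ) : ℂ) • s₁) * star ((((r / s) ^ n : ℝ) : ℂ) • s₂) * a
        + ((((r / s) ^ n : ℝ) : ℂ) • s₁) * star (f ((((r / s) ^ n : ℝ) : ℂ) • s₂)) * a
        + ((((r / s) ^ n : ℝ) : ℂ) • s₁) * star ((((r / s) ^ n : ℝ) : ℂ) • s₂) * f a)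
    (φ : A → A → A → ℝ) (hφ0 : ∀ x y a, 0 ≤ φ x y a)
    (hsum : ∀ x y a : A, Summable (fun j : ℕ =>
      ((r / s) ^ j)⁻¹ * φ ((((r / s) ^ j : ℝ) : ℂ) • x) ((((r / s) ^ j : ℝ) : ℂ) • y)
        ((((r / s) ^ j : ℝ) : ℂ) • a)))
    (hineq : ∀ μ : ℂ, ‖μ‖ = 1 → ∀ x y a : A,
      ‖(r : ℂ) • f ((r : ℂ)⁻¹ • (μ • (s : ℂ) • x + μ • (t : ℂ) • y + a * star a * a))
          - μ • (s : ℂ) • f x - μ • (t : ℂ) • f y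
          - f a * star a * a - a * star (f a) * a - a * star a * f a‖
        ≤ φ x y a) :
    ∃! h : A → A,
      (IsLinearMap ℂ h ∧ ∀ x : A, h (x * star x * x) =
        h x * star x * x + x * star (h x) * x + x * star x * h x) ∧
      ∀ x : A, ‖f x - h x‖ ≤
        (1 / r) * ∑' j : ℕ,
          ((r / s) ^ j)⁻¹ * φ ((((r / s) ^ j : ℝ) : ℂ) • x) ((((r / s) ^ j : ℝ) : ℂ) • x) 0 :=
  stmt_10_general r s t hrs hs ht S hspan f hf0 hmul φ hφ0 hsum hineq
end
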